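/- Let fᵢ: ℝ → ℝ (i = 1,...,N) be differentiable, strongly convex with Lipschitz gradients, let L be the Laplacian of a strongly connected weight-balanced digraph, and let α, β > 0. If (Z*, Λ*) ∈ ℝ^N × ℝ^N satisfies α∇f̃(Z*) + βLZ* + LΛ* = 0 and LZ* = 0, then Z* = y*𝟙, where y* is the unique minimizer of f(s) = Σᵢ fᵢ(s) and ∇f̃(Z) = (f₁'(z₁),...,f_N'(z_N)). -/

import Mathlib

/-!
Since `L Z* = 0` and `ker L = span 𝟙`, `Z* = c 𝟙`. Summing the first equation, the Laplacian
terms vanish because `𝟙ᵀ L = 0`, so `∑ fᵢ'(c) = 0 = ∑ fᵢ'(y*)`; as `∑ fᵢ'` is strongly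
monotone, `c = y*`.
-/

open Matrix

theorem Matrix.sum_mulVec_eq_zero_of_vecMul_one_eq_zero {m n R : Type*} [Fintype m] [Fintype n]
    [CommSemiring R] {L : Matrix m n R} (hL : vecMul (fun _ => 1) L = 0) (x : n → R) :
    ∑ i, (L *ᵥ x) i = 0 := by
  have h : (fun _ => (1 : R)) ⬝ᵥ L *ᵥ x = 0 := by
    rw [dotProduct_mulVec, hL, zero_dotProduct]
  simpa [dotProduct] using h

theorem sum_deriv_eq_zero_of_forall_sum_le {ι : Type*} [Fintype ι] {f : ι → ℝ → ℝ} {y : ℝ}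
    (hf : ∀ i, DifferentiableAt ℝ (f i) y) (hy : ∀ s, ∑ i, f i y ≤ ∑ i, f i s) :
    ∑ i, deriv (f i) y = 0 := by
  have hmin : IsLocalMin (fun s => ∑ i, f i s) y :=
    (isMinOn_univ_iff.mpr hy).isLocalMin Filter.univ_mem
  exact hmin.hasDerivAt_eq_zero (HasDerivAt.fun_sum fun i _ => (hf i).hasDerivAt)

theorem eq_of_sum_eq_of_strongly_monotone {ι : Type*} [Fintype ι] [Nonempty ι]
    {g : ι → ℝ → ℝ} {l : ℝ} (hl : 0 < l)
    (hg : ∀ i, ∀ a b : ℝ, (g i a - g i b) * (a - b) ≥ l * (a - b) ^ 2) {a b : ℝ}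
    (h : ∑ i, g i a = ∑ i, g i b) : a = b := by
  have hsum : (Fintype.card ι : ℝ) * (l * (a - b) ^ 2) ≤ 0 :=
    calc (Fintype.card ι : ℝ) * (l * (a - b) ^ 2) = ∑ _i : ι, l * (a - b) ^ 2 := by simp
      _ ≤ ∑ i, (g i a - g i b) * (a - b) := Finset.sum_le_sum fun i _ => hg i a b
      _ = 0 := by rw [← Finset.sum_mul, Finset.sum_sub_distrib, h, sub_self, zero_mul]
  have hcard : (0 : ℝ) < Fintype.card ι := by exact_mod_cast Fintype.card_pos
  have hsq : (a - b) ^ 2 ≤ 0 := by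
    by_contra! hpos
    linarith [mul_pos hcard (mul_pos hl hpos)]
  exact sub_eq_zero.mp (pow_eq_zero_iff two_ne_zero |>.mp (le_antisymm hsq (sq_nonneg _)))

theorem stmt_7_general (N : ℕ) (f : Fin N → ℝ → ℝ)
    (hdiff : ∀ i, Differentiable ℝ (f i))
    (l : ℝ) (hl : 0 < l)
    (hsc : ∀ i, ∀ a b : ℝ, (deriv (f i) a - deriv (f i) b) * (a - b) ≥ l * (a - b) ^ 2)
    (L : Matrix (Fin N) (Fin N) ℝ)
    (hL2 : Matrix.vecMul (fun _ => (1 : ℝ)) L = 0)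
    (hker : ∀ x : Fin N → ℝ, L.mulVec x = 0 → ∃ c : ℝ, x = fun _ => c)
    (α β : ℝ) (hα : 0 < α)
    (ystar : ℝ) (hystar : ∀ s : ℝ, ∑ i, f i ystar ≤ ∑ i, f i s)
    (Zstar Λstar : Fin N → ℝ)
    (heq1 : (fun i => α * deriv (f i) (Zstar i)) + β • L.mulVec Zstar + L.mulVec Λstar = 0)
    (heq2 : L.mulVec Zstar = 0) :
    Zstar = fun _ => ystar := by
  rcases isEmpty_or_nonempty (Fin N) with hN | hN
  · exact Subsingleton.elim _ _
  obtain ⟨c, rfl⟩ := hker Zstar heq2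
  have hc : ∑ i, deriv (f i) c = 0 := by
    have h := congrArg (fun v => ∑ i, v i) heq1
    simp only [heq2, smul_zero, add_zero, Pi.add_apply, Pi.zero_apply, Finset.sum_add_distrib,
      sum_mulVec_eq_zero_of_vecMul_one_eq_zero hL2, ← Finset.mul_sum, Finset.sum_const_zero] at h
    exact (mul_eq_zero.mp h).resolve_left hα.ne'
  have hy := sum_deriv_eq_zero_of_forall_sum_le (fun i => (hdiff i).differentiableAt) hystar
  rw [eq_of_sum_eq_of_strongly_monotone hl hsc (hc.trans hy.symm)]

theorem stmt_7 (N : ℕ) (f : Fin N → ℝ → ℝ)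
    (hdiff : ∀ i, Differentiable ℝ (f i))
    (l l' : ℝ) (hl : 0 < l) (hl' : 0 < l')
    (hsc : ∀ i, ∀ a b : ℝ, (deriv (f i) a - deriv (f i) b) * (a - b) ≥ l * (a - b) ^ 2)
    (hlip : ∀ i, ∀ a b : ℝ, |deriv (f i) a - deriv (f i) b| ≤ l' * |a - b|)
    (L : Matrix (Fin N) (Fin N) ℝ)
    (hL1 : L.mulVec (fun _ => 1) = 0)
    (hL2 : Matrix.vecMul (fun _ => (1 : ℝ)) L = 0)
    (hker : ∀ x : Fin N → ℝ, L.mulVec x = 0 → ∃ c : ℝ, x = fun _ => c)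
    (α β : ℝ) (hα : 0 < α) (hβ : 0 < β)
    (ystar : ℝ) (hystar : ∀ s : ℝ, ∑ i, f i ystar ≤ ∑ i, f i s)
    (Zstar Λstar : Fin N → ℝ)
    (heq1 : (fun i => α * deriv (f i) (Zstar i)) + β • L.mulVec Zstar + L.mulVec Λstar = 0)
    (heq2 : L.mulVec Zstar = 0) :
    Zstar = fun _ => ystar :=
  stmt_7_general N f hdiff l hl hsc L hL2 hker α β hα ystar hystar Zstar Λstar heq1 heq2
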